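/- arXiv:math/0202278 — 5 statements merged into one kernel-verified Lean document; each statement's English description precedes it below -/
import Mathlib

section
/- Let κ : [0,2π] → ℝ be continuous, and suppose u : [0,2π] → ℝ³ is a C¹ curve with |u(s)| = 1, |u'(s)| = κ(s) for all s, and ∫₀^{2π} u(s) ds = 0. Then for every ψ in the Sobolev space H¹ of 2π-periodic real functions with ∫₀^{2π} ψ² ds = 1, one has ∫₀^{2π} (|ψ'(s)|² + κ(s)² ψ(s)²) ds ≥ 1/4. -/
/-!
Write `Ψ = ψ u`. Since `|u| = 1` we have `u ⟂ u'`, so `|Ψ|² = ψ²` and `|Ψ'|² = ψ'² + κ²ψ²`.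
Take an orthonormal basis of eigenvectors of the reflection exchanging `u 0` and `u (2π)`: each
component `f` of `Ψ` then satisfies `f(0)² = f(2π)²`, and it vanishes at some `c ∈ (0, 2π)`
because the corresponding component of `u` has zero mean. For such `f`, the function
`w = cot((s - c)/2)/2` solves `w' = -1/4 - w²`, so `(f' - w f)² = f'² - f²/4 - (w f²)'`;
integrating over `(0, c)` and `(c, 2π)`, the boundary terms vanish at `c` and cancel at `0, 2π`
since `w` is `2π`-periodic, giving `∫ f'² ≥ ∫ f²/4`. Summing over the components gives the claim.
-/

open Real Set Filter Topology intervalIntegral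
open scoped RealInnerProductSpace

lemma le_integral_deriv_sq_of_riccati {f w : ℝ → ℝ} {c x y : ℝ} (hxy : x ≤ y)
    (hf : ContDiff ℝ 1 f) (hw : ∀ s ∈ Icc x y, HasDerivAt w (-c - w s ^ 2) s) :
    c * (∫ s in x..y, f s ^ 2) + (w y * f y ^ 2 - w x * f x ^ 2) ≤ ∫ s in x..y, deriv f s ^ 2 := by
  have hf' : ∀ s, HasDerivAt f (deriv f s) s := fun s =>
    ((hf.differentiable one_ne_zero) s).hasDerivAt
  have hwc : ContinuousOn w (Icc x y) := fun s hs => (hw s hs).continuousAt.continuousWithinAt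
  have hfc := hf.continuous.continuousOn (s := Icc x y)
  have hf'c := (hf.continuous_deriv le_rfl).continuousOn (s := Icc x y)
  rw [← uIcc_of_le hxy] at hw hwc hfc hf'c
  -- `(f' - w f)² = f'² - c f² - (w f²)'`
  have hderiv : ∀ s ∈ uIcc x y, HasDerivAt (fun t => w t * f t ^ 2)
      ((-c - w s ^ 2) * f s ^ 2 + w s * (2 * f s * deriv f s)) s := fun s hs =>
    ((hw s hs).fun_mul ((hf' s).fun_pow 2)).congr_deriv (by push_cast; ring)
  have hFTC := integral_eq_sub_of_hasDerivAt hderiv (ContinuousOn.intervalIntegrable (by fun_prop))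
  have hsq : 0 ≤ ∫ s in x..y, (deriv f s - w s * f s) ^ 2 :=
    integral_nonneg hxy fun s _ => sq_nonneg _
  have hsplit : ∫ s in x..y, (deriv f s - w s * f s) ^ 2 =
      (∫ s in x..y, deriv f s ^ 2) - c * (∫ s in x..y, f s ^ 2) -
        ∫ s in x..y, ((-c - w s ^ 2) * f s ^ 2 + w s * (2 * f s * deriv f s)) := by
    rw [← integral_const_mul, ← integral_sub, ← integral_sub]
    · exact integral_congr fun s _ => by ring
    all_goals exact ContinuousOn.intervalIntegrable (by fun_prop)
  linarith

lemma tendsto_integral_prod {g : ℝ → ℝ} (hg : Continuous g) (a b : ℝ) :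
    Tendsto (fun p : ℝ × ℝ => ∫ s in p.1..p.2, g s) (𝓝 (a, b)) (𝓝 (∫ s in a..b, g s)) :=
  (integral_hasFDerivAt (hg.intervalIntegrable a b) (hg.stronglyMeasurableAtFilter _ _)
    (hg.stronglyMeasurableAtFilter _ _) hg.continuousAt hg.continuousAt).continuousAt.tendsto

lemma le_integral_deriv_sq_of_riccati_of_tendsto {f w : ℝ → ℝ} {c a b α β : ℝ} (hab : a < b)
    (hf : ContDiff ℝ 1 f) (hw : ∀ s ∈ Ioo a b, HasDerivAt w (-c - w s ^ 2) s)
    (ha : Tendsto (fun s => w s * f s ^ 2) (𝓝[>] a) (𝓝 α))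
    (hb : Tendsto (fun s => w s * f s ^ 2) (𝓝[<] b) (𝓝 β)) :
    c * (∫ s in a..b, f s ^ 2) + (β - α) ≤ ∫ s in a..b, deriv f s ^ 2 := by
  have hl : 𝓝[>] a ×ˢ 𝓝[<] b ≤ 𝓝 (a, b) := by
    rw [nhds_prod_eq]; exact prod_mono nhdsWithin_le_nhds nhdsWithin_le_nhds
  have hlhs := (((tendsto_integral_prod (hf.continuous.pow 2) a b).mono_left hl).const_mul c).add
    ((hb.comp tendsto_snd).sub (ha.comp tendsto_fst))
  have hrhs := (tendsto_integral_prod ((hf.continuous_deriv le_rfl).pow 2) a b).mono_left hl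
  refine le_of_tendsto_of_tendsto hlhs hrhs ?_
  have hmid : (a + b) / 2 ∈ Ioo a b := ⟨by linarith, by linarith⟩
  filter_upwards [prod_mem_prod (Ioo_mem_nhdsGT hmid.1) (Ioo_mem_nhdsLT hmid.2)] with p hp
  exact le_integral_deriv_sq_of_riccati (by linarith [hp.1.2, hp.2.1]) hf fun s hs =>
    hw s ⟨by linarith [hp.1.1, hs.1], by linarith [hp.2.2, hs.2]⟩

noncomputable def halfCot (θ s : ℝ) : ℝ := cot ((s - θ) / 2) / 2

lemma halfCot_eq (θ : ℝ) : halfCot θ = fun s => cos ((s - θ) / 2) / sin ((s - θ) / 2) / 2 := by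
  funext s; rw [halfCot, cot_eq_cos_div_sin]

lemma hasDerivAt_halfCot {θ s : ℝ} (h : sin ((s - θ) / 2) ≠ 0) :
    HasDerivAt (halfCot θ) (-(1 / 4) - halfCot θ s ^ 2) s := by
  have hx : HasDerivAt (fun s : ℝ => (s - θ) / 2) (1 / 2) s :=
    ((hasDerivAt_id' s).sub_const θ).div_const 2
  rw [halfCot_eq]
  refine ((hx.cos.fun_div hx.sin h).div_const 2).congr_deriv ?_
  field_simp
  ring

lemma halfCot_add_two_pi (θ s : ℝ) : halfCot θ (s + 2 * π) = halfCot θ s := by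
  rw [halfCot, halfCot, show (s + 2 * π - θ) / 2 = (s - θ) / 2 + π by ring, cot_eq_cos_div_sin,
    cot_eq_cos_div_sin, cos_add_pi, sin_add_pi, neg_div_neg_eq]

lemma sin_half_sub_ne_zero {θ s : ℝ} (hs : s ∈ Ioo (θ - 2 * π) (θ + 2 * π)) (hne : s ≠ θ) :
    sin ((s - θ) / 2) ≠ 0 := by
  rw [Ne, sin_eq_zero_iff_of_lt_of_lt (by linarith [hs.1]) (by linarith [hs.2])]
  exact fun h => hne (by linarith)

lemma tendsto_halfCot_mul_sq {f : ℝ → ℝ} {f' θ : ℝ} (hf : HasDerivAt f f' θ) (hθ : f θ = 0) :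
    Tendsto (fun s => halfCot θ s * f s ^ 2) (𝓝[≠] θ) (𝓝 0) := by
  have hx : HasDerivAt (fun s : ℝ => (s - θ) / 2) (1 / 2) θ :=
    ((hasDerivAt_id' θ).sub_const θ).div_const 2
  have hsin : HasDerivAt (fun s => sin ((s - θ) / 2)) (1 / 2) θ := by simpa using hx.sin
  have hcos : Tendsto (fun s => cos ((s - θ) / 2)) (𝓝[≠] θ) (𝓝 1) := by
    simpa using hx.cos.continuousAt.tendsto.mono_left nhdsWithin_le_nhds
  have hf0 : Tendsto f (𝓝[≠] θ) (𝓝 0) := hθ ▸ hf.continuousAt.tendsto.mono_left nhdsWithin_le_nhds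
  have key := ((hcos.div_const 2).mul (hf0.mul hf.tendsto_slope)).div hsin.tendsto_slope
    (by norm_num)
  rw [zero_mul, mul_zero, zero_div] at key
  -- `cot((s - θ)/2) f(s)² = cos((s - θ)/2) f(s) · slope f θ s / slope (sin((· - θ)/2)) θ s`
  refine key.congr' ?_
  filter_upwards [self_mem_nhdsWithin] with s hs
  have hs' : s - θ ≠ 0 := sub_ne_zero.2 hs
  simp only [halfCot_eq, Pi.div_apply, slope_def_field, hθ, sub_zero, sub_self, zero_div, sin_zero]
  field_simp

theorem quarter_integral_sq_le_integral_deriv_sq {f : ℝ → ℝ} (hf : ContDiff ℝ 1 f) {c : ℝ}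
    (hc : c ∈ Ioo 0 (2 * π)) (hfc : f c = 0) (hend : f 0 ^ 2 = f (2 * π) ^ 2) :
    1 / 4 * (∫ s in (0)..(2 * π), f s ^ 2) ≤ ∫ s in (0)..(2 * π), deriv f s ^ 2 := by
  obtain ⟨hc0, hc2π⟩ := hc
  have hw : ∀ s ∈ Ioo (c - 2 * π) (c + 2 * π), s ≠ c →
      HasDerivAt (halfCot c) (-(1 / 4) - halfCot c s ^ 2) s := fun s hs hne =>
    hasDerivAt_halfCot (sin_half_sub_ne_zero hs hne)
  have hcont : ∀ s ∈ Ioo (c - 2 * π) (c + 2 * π), s ≠ c →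
      Tendsto (fun t => halfCot c t * f t ^ 2) (𝓝 s) (𝓝 (halfCot c s * f s ^ 2)) :=
    fun s hs hne => ((hw s hs hne).continuousAt.mul (hf.continuous.pow 2).continuousAt).tendsto
  have hzero := tendsto_halfCot_mul_sq ((hf.differentiable one_ne_zero c).hasDerivAt) hfc
  have hleft := le_integral_deriv_sq_of_riccati_of_tendsto hc0 hf
    (fun s hs => hw s ⟨by linarith [hs.1], by linarith [hs.2]⟩ hs.2.ne)
    ((hcont 0 ⟨by linarith, by linarith⟩ hc0.ne).mono_left nhdsWithin_le_nhds)
    (hzero.mono_left (nhdsLT_le_nhdsNE c))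
  have hright := le_integral_deriv_sq_of_riccati_of_tendsto hc2π hf
    (fun s hs => hw s ⟨by linarith [hs.1], by linarith [hs.2]⟩ hs.1.ne')
    (hzero.mono_left (nhdsGT_le_nhdsNE c))
    ((hcont (2 * π) ⟨by linarith, by linarith⟩ hc2π.ne').mono_left nhdsWithin_le_nhds)
  have hperiod : halfCot c (2 * π) = halfCot c 0 := by simpa using halfCot_add_two_pi c 0
  rw [hperiod, ← hend] at hright
  have hsplit : ∀ g : ℝ → ℝ, Continuous g →
      (∫ s in (0)..c, g s) + (∫ s in c..(2 * π), g s) = ∫ s in (0)..(2 * π), g s :=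
    fun g hg =>
      integral_add_adjacent_intervals (hg.intervalIntegrable _ _) (hg.intervalIntegrable _ _)
  have hsq := hsplit (fun s => f s ^ 2) (by fun_prop)
  have hderiv_sq := hsplit (fun s => deriv f s ^ 2) ((hf.continuous_deriv le_rfl).pow 2)
  linarith

lemma exists_mem_Ioo_eq_zero_of_integral_eq_zero {g : ℝ → ℝ} {a b : ℝ} (hab : a < b)
    (hg : ContinuousOn g (Icc a b)) (h : ∫ s in a..b, g s = 0) : ∃ c ∈ Ioo a b, g c = 0 := by
  by_contra! hne
  have hsign : (∀ x ∈ Ioo a b, 0 < g x) ∨ ∀ x ∈ Ioo a b, g x < 0 := by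
    by_contra! hmixed
    obtain ⟨⟨x, hx, hgx⟩, ⟨y, hy, hgy⟩⟩ := hmixed
    obtain ⟨c, hc, hgc⟩ := isPreconnected_Ioo.intermediate_value hx hy
      (hg.mono Ioo_subset_Icc_self) ⟨hgx, hgy⟩
    exact hne c hc hgc
  have hint := hg.intervalIntegrable_of_Icc (μ := MeasureTheory.volume) hab.le
  rcases hsign with hpos | hneg
  · exact (intervalIntegral_pos_of_pos_on hint hpos hab).ne' h
  · have := intervalIntegral_pos_of_pos_on hint.neg (fun x hx => neg_pos.2 (hneg x hx)) hab
    rw [Pi.neg_def, integral_neg, h, neg_zero] at this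
    exact this.false

lemma exists_mem_Ioo_inner_eq_zero {E : Type*} [NormedAddCommGroup E] [InnerProductSpace ℝ E]
    [CompleteSpace E] {u : ℝ → E} {a b : ℝ} (hab : a < b) (hu : Continuous u)
    (h : ∫ s in a..b, u s = 0) (v : E) : ∃ c ∈ Ioo a b, ⟪v, u c⟫ = 0 := by
  refine exists_mem_Ioo_eq_zero_of_integral_eq_zero hab (by fun_prop) ?_
  rw [← inner_zero_right v, ← h]
  exact (innerSL ℝ v).intervalIntegral_comp_comm (hu.intervalIntegrable a b)

lemma HasDerivAt.inner_eq_zero_of_norm_eq {E : Type*} [NormedAddCommGroup E]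
    [InnerProductSpace ℝ E] {u : ℝ → E} {u' : E} {s r : ℝ} (hu : HasDerivAt u u' s)
    (hnorm : ∀ t, ‖u t‖ = r) : ⟪u s, u'⟫ = 0 := by
  have h := hu.norm_sq
  simp_rw [hnorm] at h
  linarith [h.unique (hasDerivAt_const s (r ^ 2))]

lemma norm_deriv_smul_sq_of_norm_eq_one {E : Type*} [NormedAddCommGroup E]
    [InnerProductSpace ℝ E] {ψ : ℝ → ℝ} {u : ℝ → E} {ψ' s : ℝ} {u' : E}
    (hψ : HasDerivAt ψ ψ' s) (hu : HasDerivAt u u' s) (hnorm : ∀ t, ‖u t‖ = 1) :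
    ‖deriv (fun t => ψ t • u t) s‖ ^ 2 = ψ' ^ 2 + ψ s ^ 2 * ‖u'‖ ^ 2 := by
  have horth := hu.inner_eq_zero_of_norm_eq hnorm
  have hpyth := norm_add_sq_eq_norm_sq_add_norm_sq_real (x := ψ s • u') (y := ψ' • u s)
    (by rw [real_inner_smul_left, real_inner_smul_right, real_inner_comm, horth, mul_zero,
      mul_zero])
  rw [(hψ.fun_smul hu).deriv, sq, hpyth, norm_smul, norm_smul, hnorm, Real.norm_eq_abs,
    Real.norm_eq_abs, ← sq_abs ψ', ← sq_abs (ψ s)]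
  ring

lemma exists_orthonormalBasis_inner_sq_eq {E : Type*} [NormedAddCommGroup E]
    [InnerProductSpace ℝ E] [FiniteDimensional ℝ E] {p q : E} (h : ‖p‖ = ‖q‖) :
    ∃ b : OrthonormalBasis (Fin (Module.finrank ℝ E)) ℝ E, ∀ i, ⟪b i, p⟫ ^ 2 = ⟪b i, q⟫ ^ 2 := by
  set R := (ℝ ∙ (p - q))ᗮ.reflection
  have hRp : R p = q := Submodule.reflection_sub h
  have hRq : R q = p := by rw [← hRp, Submodule.reflection_reflection]
  have hRapp : ∀ x, (R : E →ₗ[ℝ] E) x = R x := fun _ => rfl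
  have hR : (R : E →ₗ[ℝ] E).IsSymmetric := fun x y => by
    rw [hRapp, hRapp, ← R.inner_map_map x (R y), Submodule.reflection_reflection]
  refine ⟨hR.eigenvectorBasis rfl, fun i => ?_⟩
  have heigen : ∀ w, ⟪hR.eigenvectorBasis rfl i, R w⟫ =
      hR.eigenvalues rfl i * ⟪hR.eigenvectorBasis rfl i, w⟫ := fun w => by
    rw [← hRapp, ← hR, hR.apply_eigenvectorBasis, real_inner_smul_left]
    rfl
  have hp := heigen q
  have hq := heigen p
  rw [hRq] at hp
  rw [hRp] at hq
  linear_combination ⟪hR.eigenvectorBasis rfl i, p⟫ * hp - ⟪hR.eigenvectorBasis rfl i, q⟫ * hq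

theorem quarter_integral_norm_sq_le_integral_norm_deriv_sq {E ι : Type*} [NormedAddCommGroup E]
    [InnerProductSpace ℝ E] [Fintype ι] (b : OrthonormalBasis ι ℝ E) {Ψ : ℝ → E}
    (hΨ : ContDiff ℝ 1 Ψ) (hzero : ∀ i, ∃ c ∈ Ioo 0 (2 * π), ⟪b i, Ψ c⟫ = 0)
    (hend : ∀ i, ⟪b i, Ψ 0⟫ ^ 2 = ⟪b i, Ψ (2 * π)⟫ ^ 2) :
    1 / 4 * (∫ s in (0)..(2 * π), ‖Ψ s‖ ^ 2) ≤ ∫ s in (0)..(2 * π), ‖deriv Ψ s‖ ^ 2 := by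
  have hcomp : ∀ i, ContDiff ℝ 1 fun s => ⟪b i, Ψ s⟫ := fun i => contDiff_const.inner ℝ hΨ
  have hderiv : ∀ i s, deriv (fun s => ⟪b i, Ψ s⟫) s = ⟪b i, deriv Ψ s⟫ := fun i s =>
    ((hasDerivAt_const s (b i)).inner ℝ ((hΨ.differentiable one_ne_zero s).hasDerivAt)).deriv.trans
      (by simp)
  simp_rw [← b.sum_sq_inner_right, ← hderiv]
  rw [integral_finsetSum, integral_finsetSum, Finset.mul_sum]
  · refine Finset.sum_le_sum fun i _ => ?_
    obtain ⟨c, hc, hΨc⟩ := hzero i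
    exact quarter_integral_sq_le_integral_deriv_sq (hcomp i) hc hΨc (hend i)
  all_goals exact fun i _ => Continuous.intervalIntegrable (by fun_prop) _ _

theorem stmt2_general (κ : ℝ → ℝ) (u : ℝ → EuclideanSpace ℝ (Fin 3))
    (hu : ContDiff ℝ 1 u)
    (hunorm : ∀ s, ‖u s‖ = 1)
    (hukappa : ∀ s, ‖deriv u s‖ = κ s)
    (hint : (∫ s in (0:ℝ)..(2 * π), u s) = 0)
    (ψ : ℝ → ℝ) (hψ : ContDiff ℝ 1 ψ)
    (hψper : Function.Periodic ψ (2 * π))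
    (hψnorm : (∫ s in (0:ℝ)..(2 * π), (ψ s) ^ 2) = 1) :
    (1 : ℝ) / 4 ≤ ∫ s in (0:ℝ)..(2 * π), ((deriv ψ s) ^ 2 + (κ s) ^ 2 * (ψ s) ^ 2) := by
  have hu' : ∀ s, HasDerivAt u (deriv u s) s := fun s =>
    (hu.differentiable one_ne_zero s).hasDerivAt
  have hψ' : ∀ s, HasDerivAt ψ (deriv ψ s) s := fun s =>
    (hψ.differentiable one_ne_zero s).hasDerivAt
  have hnorm : ∀ s, ‖ψ s • u s‖ ^ 2 = ψ s ^ 2 := fun s => by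
    rw [norm_smul, hunorm, mul_one, Real.norm_eq_abs, sq_abs]
  have hnorm' : ∀ s, ‖deriv (fun t => ψ t • u t) s‖ ^ 2 = deriv ψ s ^ 2 + κ s ^ 2 * ψ s ^ 2 :=
    fun s => by rw [norm_deriv_smul_sq_of_norm_eq_one (hψ' s) (hu' s) hunorm, hukappa, mul_comm]
  obtain ⟨b, hb⟩ := exists_orthonormalBasis_inner_sq_eq ((hunorm 0).trans (hunorm (2 * π)).symm)
  have key := quarter_integral_norm_sq_le_integral_norm_deriv_sq b
    (Ψ := fun s => ψ s • u s) (hψ.smul hu)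
    (fun i => by
      obtain ⟨c, hc, huc⟩ := exists_mem_Ioo_inner_eq_zero two_pi_pos hu.continuous hint (b i)
      exact ⟨c, hc, by rw [inner_smul_right, huc, mul_zero]⟩)
    (fun i => by simp only [inner_smul_right, mul_pow, hb i, ← hψper 0, zero_add])
  simp_rw [hnorm, hnorm', hψnorm] at key
  linarith

/-- Quadratic form lower bound ∫ (ψ'² + κ²ψ²) ≥ 1/4 for normalized periodic ψ,
    when κ is the curvature profile of a closed unit-speed tangent curve u
    with ∫ u = 0. -/
theorem stmt2 (κ : ℝ → ℝ) (u : ℝ → EuclideanSpace ℝ (Fin 3))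
    (hκ : ContinuousOn κ (Set.Icc 0 (2 * π)))
    (hu : ContDiff ℝ 1 u)
    (hunorm : ∀ s, ‖u s‖ = 1)
    (hukappa : ∀ s, ‖deriv u s‖ = κ s)
    (hint : (∫ s in (0:ℝ)..(2 * π), u s) = 0)
    (ψ : ℝ → ℝ) (hψ : ContDiff ℝ 1 ψ)
    (hψper : Function.Periodic ψ (2 * π))
    (hψnorm : (∫ s in (0:ℝ)..(2 * π), (ψ s) ^ 2) = 1) :
    (1 : ℝ) / 4 ≤ ∫ s in (0:ℝ)..(2 * π), ((deriv ψ s) ^ 2 + (κ s) ^ 2 * (ψ s) ^ 2) :=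
  stmt2_general κ u hu hunorm hukappa hint ψ hψ hψper hψnorm
end

section
/- For r ≥ 0 there is a constant C = C(r) such that for all 2π-periodic f, g ∈ H^r, ‖fg‖_{H^{r-1}} ≤ C ‖f‖_{H^r} ‖g‖_{H^r}. -/
/-- Fourier-side H^r norm of a 2π-periodic function with Fourier coefficients c. -/
noncomputable def sobNorm (r : ℝ) (c : ℤ → ℂ) : ℝ :=
  Real.sqrt (∑' n : ℤ, (1 + (n : ℝ) ^ 2) ^ r * ‖c n‖ ^ 2)

/-- Membership in the periodic Sobolev space H^r, on the Fourier side. -/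
def memSob (r : ℝ) (c : ℤ → ℂ) : Prop :=
  Summable fun n : ℤ => (1 + (n : ℝ) ^ 2) ^ r * ‖c n‖ ^ 2

/-- Fourier coefficients of the product fg: convolution of the coefficients. -/
noncomputable def fconv (c d : ℤ → ℂ) (n : ℤ) : ℂ := ∑' k : ℤ, c k * d (n - k)

/-- Summability of `1/(1+n²)` over `ℤ`. -/
lemma sumInvZ : Summable (fun n : ℤ => ((1:ℝ) + (n:ℝ) ^ 2)⁻¹) := by
  have hnat : Summable (fun n : ℕ => ((1:ℝ) + (n:ℝ) ^ 2)⁻¹) := by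
    have h2 : Summable (fun n : ℕ => 2 * (1 / ((n:ℝ) + 1) ^ 2)) := by
      have h := (summable_nat_add_iff (f := fun n : ℕ => 1 / (n:ℝ) ^ 2) 1).2
        (Real.summable_one_div_nat_pow.2 (by norm_num))
      exact (h.mul_left 2).congr (by intro n; push_cast; ring_nf)
    refine Summable.of_nonneg_of_le (fun n => by positivity) (fun n => ?_) h2
    have key : ((n:ℝ) + 1) ^ 2 ≤ 2 * (1 + (n:ℝ) ^ 2) := by nlinarith [sq_nonneg ((n:ℝ) - 1)]
    calc ((1:ℝ) + (n:ℝ) ^ 2)⁻¹ ≤ 2 / ((n:ℝ) + 1) ^ 2 := by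
          rw [inv_eq_one_div, div_le_div_iff₀ (by positivity) (by positivity)]
          linarith
      _ = 2 * (1 / ((n:ℝ) + 1) ^ 2) := by ring
  refine Summable.of_nat_of_neg (hnat.congr ?_) (hnat.congr ?_) <;>
    intro n <;> push_cast <;> ring_nf

/-- Cauchy–Schwarz summability: the product of two ℓ² sequences is ℓ¹. -/
lemma cs_summable {x y : ℤ → ℝ} (hx : ∀ k, 0 ≤ x k) (hy : ∀ k, 0 ≤ y k)
    (hx2 : Summable fun k => x k ^ 2) (hy2 : Summable fun k => y k ^ 2) :
    Summable fun k => x k * y k := by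
  refine Summable.of_nonneg_of_le (fun k => mul_nonneg (hx k) (hy k)) (fun k => ?_)
    ((hx2.add hy2).div_const 2)
  nlinarith [sq_nonneg (x k - y k)]

/-- Cauchy–Schwarz for tsums over ℤ. -/
lemma cs_tsum {x y : ℤ → ℝ} (hx : ∀ k, 0 ≤ x k) (hy : ∀ k, 0 ≤ y k)
    (hx2 : Summable fun k => x k ^ 2) (hy2 : Summable fun k => y k ^ 2) :
    ∑' k, x k * y k ≤ Real.sqrt (∑' k, x k ^ 2) * Real.sqrt (∑' k, y k ^ 2) := by
  refine Summable.tsum_le_of_sum_le (cs_summable hx hy hx2 hy2) (fun s => ?_)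
  calc ∑ k ∈ s, x k * y k
      ≤ Real.sqrt (∑ k ∈ s, x k ^ 2) * Real.sqrt (∑ k ∈ s, y k ^ 2) :=
        Real.sum_mul_le_sqrt_mul_sqrt s x y
    _ ≤ Real.sqrt (∑' k, x k ^ 2) * Real.sqrt (∑' k, y k ^ 2) := by
        gcongr <;> [skip; skip] <;>
          exact Summable.sum_le_tsum s (fun k _ => sq_nonneg _) (by assumption)

/-- The key Peetre-type inequality. -/
lemma keyIneq {r : ℝ} (hr : 0 ≤ r) (n k : ℤ) :
    (1 + (n:ℝ) ^ 2) ^ (r/2) ≤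
      2 ^ r * ((1 + (k:ℝ) ^ 2) ^ (r/2) * (1 + ((n:ℝ) - (k:ℝ)) ^ 2) ^ (r/2)) := by
  have h1 : (1 + (n:ℝ) ^ 2) ≤ 4 * ((1 + (k:ℝ) ^ 2) * (1 + ((n:ℝ) - k) ^ 2)) := by
    nlinarith [sq_nonneg ((n:ℝ) - 2 * k), sq_nonneg ((k:ℝ) * ((n:ℝ) - k))]
  calc (1 + (n:ℝ) ^ 2) ^ (r/2)
      ≤ (4 * ((1 + (k:ℝ) ^ 2) * (1 + ((n:ℝ) - k) ^ 2))) ^ (r/2) :=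
        Real.rpow_le_rpow (by positivity) h1 (by positivity)
    _ = 2 ^ r * ((1 + (k:ℝ) ^ 2) ^ (r/2) * (1 + ((n:ℝ) - (k:ℝ)) ^ 2) ^ (r/2)) := by
        rw [Real.mul_rpow (by norm_num) (by positivity),
          Real.mul_rpow (by positivity) (by positivity),
          show (4:ℝ) = (2:ℝ) ^ (2:ℝ) by
            rw [show (2:ℝ) = ((2:ℕ):ℝ) by norm_num, Real.rpow_natCast]; norm_num,
          ← Real.rpow_mul (by norm_num), show 2 * (r/2) = r by ring]

/-- Leibniz rule: for r ≥ 0, ‖fg‖_{H^{r-1}} ≤ C ‖f‖_{H^r} ‖g‖_{H^r}. -/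
theorem stmt8 : ∀ r : ℝ, 0 ≤ r → ∃ C : ℝ, 0 < C ∧ ∀ c d : ℤ → ℂ,
    memSob r c → memSob r d →
    memSob (r - 1) (fconv c d) ∧
      sobNorm (r - 1) (fconv c d) ≤ C * sobNorm r c * sobNorm r d := by
  intro r hr
  set S : ℝ := ∑' n : ℤ, ((1:ℝ) + (n:ℝ) ^ 2)⁻¹ with hS
  refine ⟨2 ^ r * (Real.sqrt S + 1), by positivity, ?_⟩
  intro c d hc hd
  set x : ℤ → ℝ := fun k => (1 + (k:ℝ) ^ 2) ^ (r/2) * ‖c k‖ with hxdef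
  set y : ℤ → ℝ := fun k => (1 + (k:ℝ) ^ 2) ^ (r/2) * ‖d k‖ with hydef
  have hxnn : ∀ k, 0 ≤ x k := fun k => by positivity
  have hynn : ∀ k, 0 ≤ y k := fun k => by positivity
  have hsq : ∀ (k : ℤ) (e : ℤ → ℂ),
      ((1 + (k:ℝ) ^ 2) ^ (r/2) * ‖e k‖) ^ 2 = (1 + (k:ℝ) ^ 2) ^ r * ‖e k‖ ^ 2 := by
    intro k e
    have hb : (0:ℝ) < 1 + (k:ℝ) ^ 2 := by positivity
    rw [mul_pow, sq ((1 + (k:ℝ) ^ 2) ^ (r/2)), ← Real.rpow_add hb]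
    norm_num
  have hx2 : Summable fun k => x k ^ 2 := hc.congr (fun k => (hsq k c).symm)
  have hy2 : Summable fun k => y k ^ 2 := hd.congr (fun k => (hsq k d).symm)
  have hA : Real.sqrt (∑' k, x k ^ 2) = sobNorm r c := by
    rw [sobNorm]; congr 1; exact tsum_congr (fun k => hsq k c)
  have hB : Real.sqrt (∑' k, y k ^ 2) = sobNorm r d := by
    rw [sobNorm]; congr 1; exact tsum_congr (fun k => hsq k d)
  set A := sobNorm r c
  set B := sobNorm r d
  have hAnn : 0 ≤ A := Real.sqrt_nonneg _
  have hBnn : 0 ≤ B := Real.sqrt_nonneg _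
  -- shifted y is ℓ²
  have hy2sh : ∀ n : ℤ, Summable fun k => y (n - k) ^ 2 := by
    intro n
    exact ((Equiv.subLeft n).summable_iff (f := fun m => y m ^ 2)).2 hy2
  have hy2sheq : ∀ n : ℤ, (∑' k, y (n - k) ^ 2) = ∑' k, y k ^ 2 := by
    intro n
    exact (Equiv.subLeft n).tsum_eq (fun m => y m ^ 2)
  -- key pointwise bound on the weighted convolution
  have hT : ∀ n : ℤ, (1 + (n:ℝ) ^ 2) ^ (r/2) * ‖fconv c d n‖ ≤ 2 ^ r * (A * B) := by
    intro n
    have hsum1 : Summable fun k => x k * y (n - k) :=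
      cs_summable hxnn (fun k => hynn _) hx2 (hy2sh n)
    have hle1 : ∀ k : ℤ, ‖c k * d (n - k)‖ ≤ x k * y (n - k) := by
      intro k
      rw [norm_mul]
      have h1 : ‖c k‖ ≤ x k := by
        rw [hxdef]
        have : (1:ℝ) ≤ (1 + (k:ℝ) ^ 2) ^ (r/2) :=
          Real.one_le_rpow (by nlinarith [sq_nonneg ((k:ℝ))]) (by positivity)
        nlinarith [norm_nonneg (c k)]
      have h2 : ‖d (n - k)‖ ≤ y (n - k) := by
        rw [hydef]
        have : (1:ℝ) ≤ (1 + ((n - k : ℤ):ℝ) ^ 2) ^ (r/2) :=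
          Real.one_le_rpow (by nlinarith [sq_nonneg (((n - k : ℤ)):ℝ)]) (by positivity)
        nlinarith [norm_nonneg (d (n - k))]
      exact mul_le_mul h1 h2 (norm_nonneg _) (hxnn k)
    have hsumnorm : Summable fun k => ‖c k * d (n - k)‖ :=
      Summable.of_nonneg_of_le (fun k => norm_nonneg _) hle1 hsum1
    have h0 : ‖fconv c d n‖ ≤ ∑' k, ‖c k * d (n - k)‖ :=
      norm_tsum_le_tsum_norm hsumnorm
    -- weighted pointwise bound
    have hle2 : ∀ k : ℤ, (1 + (n:ℝ) ^ 2) ^ (r/2) * ‖c k * d (n - k)‖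
        ≤ 2 ^ r * (x k * y (n - k)) := by
      intro k
      have hk := keyIneq hr n k
      have hcd : (0:ℝ) ≤ ‖c k‖ * ‖d (n - k)‖ := by positivity
      have expand : x k * y (n - k) =
          ((1 + (k:ℝ) ^ 2) ^ (r/2) * (1 + ((n:ℝ) - (k:ℝ)) ^ 2) ^ (r/2)) *
            (‖c k‖ * ‖d (n - k)‖) := by
        rw [hxdef, hydef]
        push_cast
        ring
      rw [norm_mul, expand]
      calc (1 + (n:ℝ) ^ 2) ^ (r/2) * (‖c k‖ * ‖d (n - k)‖)
          ≤ (2 ^ r * ((1 + (k:ℝ) ^ 2) ^ (r/2) * (1 + ((n:ℝ) - (k:ℝ)) ^ 2) ^ (r/2))) *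
              (‖c k‖ * ‖d (n - k)‖) := by
            exact mul_le_mul_of_nonneg_right hk hcd
        _ = 2 ^ r * (((1 + (k:ℝ) ^ 2) ^ (r/2) * (1 + ((n:ℝ) - (k:ℝ)) ^ 2) ^ (r/2)) *
              (‖c k‖ * ‖d (n - k)‖)) := by ring
    calc (1 + (n:ℝ) ^ 2) ^ (r/2) * ‖fconv c d n‖
        ≤ (1 + (n:ℝ) ^ 2) ^ (r/2) * ∑' k, ‖c k * d (n - k)‖ := by
          exact mul_le_mul_of_nonneg_left h0 (by positivity)
      _ = ∑' k, (1 + (n:ℝ) ^ 2) ^ (r/2) * ‖c k * d (n - k)‖ := (tsum_mul_left).symm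
      _ ≤ ∑' k, 2 ^ r * (x k * y (n - k)) := by
          refine Summable.tsum_le_tsum hle2 ?_ (hsum1.mul_left _)
          exact (hsumnorm.mul_left _)
      _ = 2 ^ r * ∑' k, x k * y (n - k) := tsum_mul_left
      _ ≤ 2 ^ r * (Real.sqrt (∑' k, x k ^ 2) * Real.sqrt (∑' k, y (n - k) ^ 2)) := by
          refine mul_le_mul_of_nonneg_left ?_ (by positivity)
          exact cs_tsum hxnn (fun k => hynn _) hx2 (hy2sh n)
      _ = 2 ^ r * (A * B) := by rw [hy2sheq n, hA, hB]
  -- the summand of memSob (r-1)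
  have hterm : ∀ n : ℤ, (1 + (n:ℝ) ^ 2) ^ (r - 1) * ‖fconv c d n‖ ^ 2
      ≤ ((1:ℝ) + (n:ℝ) ^ 2)⁻¹ * (2 ^ r * (A * B)) ^ 2 := by
    intro n
    have hb : (0:ℝ) < 1 + (n:ℝ) ^ 2 := by positivity
    have hrw : (1 + (n:ℝ) ^ 2) ^ (r - 1) * ‖fconv c d n‖ ^ 2
        = ((1:ℝ) + (n:ℝ) ^ 2)⁻¹ * ((1 + (n:ℝ) ^ 2) ^ (r/2) * ‖fconv c d n‖) ^ 2 := by
      rw [mul_pow, sq ((1 + (n:ℝ) ^ 2) ^ (r/2)), ← Real.rpow_add hb,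
        Real.rpow_sub hb, Real.rpow_one]
      norm_num
      ring
    rw [hrw]
    refine mul_le_mul_of_nonneg_left ?_ (by positivity)
    have h1 := hT n
    have h2 : (0:ℝ) ≤ (1 + (n:ℝ) ^ 2) ^ (r/2) * ‖fconv c d n‖ := by positivity
    nlinarith
  have hsummem : Summable fun n : ℤ => (1 + (n:ℝ) ^ 2) ^ (r - 1) * ‖fconv c d n‖ ^ 2 := by
    refine Summable.of_nonneg_of_le (fun n => by positivity) hterm ?_
    exact sumInvZ.mul_right _
  refine ⟨hsummem, ?_⟩
  rw [sobNorm]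
  have hsum2 : Summable fun n : ℤ => ((1:ℝ) + (n:ℝ) ^ 2)⁻¹ * (2 ^ r * (A * B)) ^ 2 :=
    sumInvZ.mul_right _
  calc Real.sqrt (∑' n : ℤ, (1 + (n:ℝ) ^ 2) ^ (r - 1) * ‖fconv c d n‖ ^ 2)
      ≤ Real.sqrt (∑' n : ℤ, ((1:ℝ) + (n:ℝ) ^ 2)⁻¹ * (2 ^ r * (A * B)) ^ 2) := by
        exact Real.sqrt_le_sqrt (Summable.tsum_le_tsum hterm hsummem hsum2)
    _ = Real.sqrt (S * (2 ^ r * (A * B)) ^ 2) := by rw [tsum_mul_right]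
    _ = Real.sqrt S * (2 ^ r * (A * B)) := by
        rw [Real.sqrt_mul (by
          refine tsum_nonneg (fun n => by positivity)) _,
          Real.sqrt_sq (by positivity)]
    _ ≤ (Real.sqrt S + 1) * (2 ^ r * (A * B)) := by
        refine mul_le_mul_of_nonneg_right (by linarith [Real.sqrt_nonneg S]) (by positivity)
    _ = 2 ^ r * (Real.sqrt S + 1) * A * B := by ring
end

section
/- For r ≥ 1/2 there is a constant C = C(r) such that for all 2π-periodic f ∈ H^{r-1} and g ∈ H^{r+1}, ‖fg‖_{H^{r-1}} ≤ C ‖f‖_{H^{r-1}} ‖g‖_{H^{r+1}}. -/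
/-!
Write `w n = 1 + n ^ 2`, `s = r - 1` and `u = s / 2`. Peetre's inequality
`w n ^ u ≤ 2 ^ |u| * w k ^ u * w (n - k) ^ |u|` bounds the weighted coefficients
`w n ^ u * |(c * d) n|` of the product by `2 ^ |u|` times the convolution of `w ^ u * |c|`,
an `ℓ²` sequence of norm `‖c‖_{H^s}`, with `w ^ |u| * |d|`. By Cauchy–Schwarz against the
summable `w⁻¹`, the latter is in `ℓ¹` with norm at most `(∑ w⁻¹) ^ (1/2) * ‖d‖_{H^(|s|+1)}`,
and `|s| + 1 ≤ s + 2` exactly when `s ≥ -1/2`. Young's inequality `‖a * b‖₂ ≤ ‖a‖₂ * ‖b‖₁`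
concludes. All sums are taken in `ℝ≥0∞`, so that summability is only read off at the end.
-/

open scoped ENNReal

namespace ENNReal

theorem tsum_mul_sq_le {ι : Type*} (w f : ι → ℝ≥0∞) :
    (∑' i, w i * f i) ^ 2 ≤ (∑' i, w i) * ∑' i, w i * f i ^ 2 := by
  rw [ENNReal.tsum_eq_iSup_sum, ENNReal.iSup_pow_of_ne_zero two_ne_zero]
  refine iSup_le fun s => ?_
  have h := ENNReal.inner_le_weight_mul_Lp_of_nonneg s one_le_two w f
  calc (∑ i ∈ s, w i * f i) ^ 2 ≤ (∑ i ∈ s, w i) * ∑ i ∈ s, w i * f i ^ 2 := by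
        grw [h, mul_pow, ← ENNReal.rpow_mul_natCast, ← ENNReal.rpow_mul_natCast]
        norm_num
    _ ≤ (∑' i, w i) * ∑' i, w i * f i ^ 2 := by
        gcongr <;> exact ENNReal.sum_le_tsum s

theorem tsum_conv_sq_le {G : Type*} [AddGroup G] (f g : G → ℝ≥0∞) :
    ∑' n, (∑' k, f k * g (n - k)) ^ 2 ≤ (∑' k, f k ^ 2) * (∑' k, g k) ^ 2 := by
  have shift_left (n : G) : ∑' k, g (n - k) = ∑' k, g k := (Equiv.subLeft n).tsum_eq g
  have shift_right (k : G) : ∑' n, g (n - k) = ∑' k, g k := (Equiv.subRight k).tsum_eq g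
  calc ∑' n, (∑' k, f k * g (n - k)) ^ 2
      ≤ ∑' n, (∑' k, g k) * ∑' k, g (n - k) * f k ^ 2 := by
        gcongr with n
        simpa only [mul_comm (f _), shift_left] using tsum_mul_sq_le (fun k => g (n - k)) f
    _ = (∑' k, g k) * ∑' k, (∑' n, g (n - k)) * f k ^ 2 := by
        rw [ENNReal.tsum_mul_left, ENNReal.tsum_comm]
        simp only [ENNReal.tsum_mul_right]
    _ = (∑' k, f k ^ 2) * (∑' k, g k) ^ 2 := by
        simp only [shift_right, ENNReal.tsum_mul_left]
        ring

end ENNReal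

noncomputable def sobWeight (n : ℤ) : ℝ := 1 + (n : ℝ) ^ 2

lemma one_le_sobWeight (n : ℤ) : 1 ≤ sobWeight n := by
  unfold sobWeight; nlinarith [sq_nonneg (n : ℝ)]

lemma sobWeight_pos (n : ℤ) : 0 < sobWeight n := one_pos.trans_le (one_le_sobWeight n)

lemma sobWeight_sub_comm (n k : ℤ) : sobWeight (n - k) = sobWeight (k - n) := by
  simp only [sobWeight, Int.cast_sub]; ring

lemma sobWeight_le_two_mul (n k : ℤ) : sobWeight n ≤ 2 * sobWeight k * sobWeight (n - k) := by
  simp only [sobWeight, Int.cast_sub]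
  nlinarith [sq_nonneg ((n : ℝ) - 2 * k), sq_nonneg (((n : ℝ) - k) * k), sq_nonneg ((n : ℝ) - k)]

lemma sobWeight_rpow_le (t : ℝ) (n k : ℤ) :
    sobWeight n ^ t ≤ 2 ^ |t| * sobWeight k ^ t * sobWeight (n - k) ^ |t| := by
  have hw (m : ℤ) := (sobWeight_pos m).le
  rcases le_or_gt 0 t with ht | ht
  · rw [abs_of_nonneg ht, ← Real.mul_rpow zero_le_two (hw _),
      ← Real.mul_rpow (mul_nonneg zero_le_two (hw _)) (hw _)]
    exact Real.rpow_le_rpow (hw n) (sobWeight_le_two_mul n k) ht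
  · have key :
        sobWeight k ^ (-t) ≤ 2 ^ (-t) * sobWeight n ^ (-t) * sobWeight (n - k) ^ (-t) := by
      rw [← Real.mul_rpow zero_le_two (hw _),
        ← Real.mul_rpow (mul_nonneg zero_le_two (hw _)) (hw _), sobWeight_sub_comm]
      exact Real.rpow_le_rpow (hw k) (sobWeight_le_two_mul k n) (by linarith)
    have cancel (m : ℤ) : sobWeight m ^ (-t) * sobWeight m ^ t = 1 := by
      rw [← Real.rpow_add (sobWeight_pos m), neg_add_cancel, Real.rpow_zero]
    rw [abs_of_neg ht]
    calc sobWeight n ^ t = sobWeight k ^ t * sobWeight k ^ (-t) * sobWeight n ^ t := by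
          rw [mul_comm (sobWeight k ^ t), cancel, one_mul]
      _ ≤ sobWeight k ^ t * (2 ^ (-t) * sobWeight n ^ (-t) * sobWeight (n - k) ^ (-t)) *
            sobWeight n ^ t := by gcongr <;> exact Real.rpow_nonneg (hw _) _
      _ = 2 ^ (-t) * sobWeight k ^ t * sobWeight (n - k) ^ (-t) := by
          linear_combination (2 ^ (-t) * sobWeight k ^ t * sobWeight (n - k) ^ (-t)) * cancel n

lemma summable_sobWeight_inv : Summable fun n : ℤ => (sobWeight n)⁻¹ := by
  refine Summable.of_norm_bounded_eventually (Real.summable_one_div_int_pow.mpr one_lt_two) ?_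
  filter_upwards [(Set.finite_singleton (0 : ℤ)).compl_mem_cofinite] with n hn
  have hn : (n : ℝ) ≠ 0 := by simpa using hn
  rw [Real.norm_of_nonneg (inv_nonneg.mpr (sobWeight_pos n).le), one_div]
  exact inv_anti₀ (by positivity) (by simp [sobWeight])

lemma tsum_sobWeight_inv_pos : 0 < ∑' n : ℤ, (sobWeight n)⁻¹ :=
  summable_sobWeight_inv.tsum_pos (fun n => inv_nonneg.mpr (sobWeight_pos n).le) 0
    (inv_pos.mpr (sobWeight_pos 0))

lemma ofReal_sobWeight_rpow_mul (n : ℤ) (a b : ℝ) :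
    ENNReal.ofReal (sobWeight n ^ a) * ENNReal.ofReal (sobWeight n ^ b) =
      ENNReal.ofReal (sobWeight n ^ (a + b)) := by
  rw [← ENNReal.ofReal_mul (Real.rpow_nonneg (sobWeight_pos n).le _),
    ← Real.rpow_add (sobWeight_pos n)]

lemma ofReal_sobWeight_rpow_sq (n : ℤ) (a : ℝ) :
    ENNReal.ofReal (sobWeight n ^ a) ^ 2 = ENNReal.ofReal (sobWeight n ^ (2 * a)) := by
  rw [sq, ofReal_sobWeight_rpow_mul, two_mul]

noncomputable def weightedENorm (t : ℝ) (c : ℤ → ℂ) (n : ℤ) : ℝ≥0∞ :=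
  ENNReal.ofReal (sobWeight n ^ t) * ‖c n‖ₑ

noncomputable def sobEnergy (s : ℝ) (c : ℤ → ℂ) : ℝ≥0∞ := ∑' n, weightedENorm (s / 2) c n ^ 2

lemma weightedENorm_half_sq (s : ℝ) (c : ℤ → ℂ) (n : ℤ) :
    weightedENorm (s / 2) c n ^ 2 = ENNReal.ofReal (sobWeight n ^ s) * ‖c n‖ₑ ^ 2 := by
  rw [weightedENorm, mul_pow, ofReal_sobWeight_rpow_sq, mul_div_cancel₀ s two_ne_zero]

lemma weightedENorm_half_sq_eq_ofReal (s : ℝ) (c : ℤ → ℂ) (n : ℤ) :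
    weightedENorm (s / 2) c n ^ 2 = ENNReal.ofReal ((1 + (n : ℝ) ^ 2) ^ s * ‖c n‖ ^ 2) := by
  rw [weightedENorm_half_sq, ← ofReal_norm, ← ENNReal.ofReal_pow (norm_nonneg _),
    ← ENNReal.ofReal_mul (Real.rpow_nonneg (sobWeight_pos n).le _), sobWeight]

lemma memSob_iff_sobEnergy_ne_top (s : ℝ) (c : ℤ → ℂ) : memSob s c ↔ sobEnergy s c ≠ ⊤ := by
  simp only [sobEnergy, weightedENorm_half_sq_eq_ofReal]
  refine ⟨Summable.tsum_ofReal_ne_top, fun h => ?_⟩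
  refine (ENNReal.summable_toReal h).congr fun n => ENNReal.toReal_ofReal ?_
  have := (sobWeight_pos n).le
  positivity

lemma sobNorm_eq_sqrt_sobEnergy (s : ℝ) (c : ℤ → ℂ) :
    sobNorm s c = √(sobEnergy s c).toReal := by
  simp only [sobNorm, sobEnergy, weightedENorm_half_sq_eq_ofReal]
  rw [ENNReal.tsum_toReal_eq fun _ => ENNReal.ofReal_ne_top]
  congr 1
  refine tsum_congr fun n => (ENNReal.toReal_ofReal ?_).symm
  have := (sobWeight_pos n).le
  positivity

lemma sobEnergy_mono {s s' : ℝ} (h : s ≤ s') (c : ℤ → ℂ) : sobEnergy s c ≤ sobEnergy s' c := by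
  refine ENNReal.tsum_le_tsum fun n => ?_
  simp only [weightedENorm_half_sq]
  gcongr
  exact one_le_sobWeight n

lemma enorm_fconv_le (c d : ℤ → ℂ) (n : ℤ) :
    ‖fconv c d n‖ₑ ≤ ∑' k, ‖c k‖ₑ * ‖d (n - k)‖ₑ := by
  -- no summability is needed: a non-summable `tsum` is `0`
  simpa only [fconv, enorm_mul] using enorm_tsum_le_tsum_enorm (f := fun k => c k * d (n - k))

lemma weightedENorm_fconv_le (t : ℝ) (c d : ℤ → ℂ) (n : ℤ) :
    weightedENorm t (fconv c d) n ≤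
      ENNReal.ofReal (2 ^ |t|) * ∑' k, weightedENorm t c k * weightedENorm |t| d (n - k) := by
  calc weightedENorm t (fconv c d) n
      ≤ ENNReal.ofReal (sobWeight n ^ t) * ∑' k, ‖c k‖ₑ * ‖d (n - k)‖ₑ := by
        unfold weightedENorm; gcongr; exact enorm_fconv_le c d n
    _ = ∑' k, ENNReal.ofReal (sobWeight n ^ t) * (‖c k‖ₑ * ‖d (n - k)‖ₑ) :=
        ENNReal.tsum_mul_left.symm
    _ ≤ ∑' k, ENNReal.ofReal (2 ^ |t|) *
          (weightedENorm t c k * weightedENorm |t| d (n - k)) := by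
        refine ENNReal.tsum_le_tsum fun k => ?_
        have hpeetre := ENNReal.ofReal_le_ofReal (sobWeight_rpow_le t n k)
        rw [ENNReal.ofReal_mul
            (mul_nonneg (by positivity) (Real.rpow_nonneg (sobWeight_pos k).le _)),
          ENNReal.ofReal_mul (by positivity)] at hpeetre
        calc ENNReal.ofReal (sobWeight n ^ t) * (‖c k‖ₑ * ‖d (n - k)‖ₑ)
            ≤ ENNReal.ofReal (2 ^ |t|) * ENNReal.ofReal (sobWeight k ^ t) *
                ENNReal.ofReal (sobWeight (n - k) ^ |t|) * (‖c k‖ₑ * ‖d (n - k)‖ₑ) := by gcongr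
          _ = _ := by unfold weightedENorm; ring
    _ = ENNReal.ofReal (2 ^ |t|) * ∑' k, weightedENorm t c k * weightedENorm |t| d (n - k) :=
        ENNReal.tsum_mul_left

lemma tsum_weightedENorm_sq_le (t : ℝ) (d : ℤ → ℂ) :
    (∑' n, weightedENorm t d n) ^ 2 ≤
      ENNReal.ofReal (∑' n, (sobWeight n)⁻¹) * sobEnergy (2 * t + 1) d := by
  have split (n : ℤ) : weightedENorm t d n =
      ENNReal.ofReal (sobWeight n ^ (-1 : ℝ)) * weightedENorm (t + 1) d n := by
    rw [weightedENorm, weightedENorm, ← mul_assoc, ofReal_sobWeight_rpow_mul]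
    ring_nf
  have weighted_sq (n : ℤ) :
      ENNReal.ofReal (sobWeight n ^ (-1 : ℝ)) * weightedENorm (t + 1) d n ^ 2 =
        weightedENorm ((2 * t + 1) / 2) d n ^ 2 := by
    rw [weightedENorm_half_sq, weightedENorm, mul_pow, ofReal_sobWeight_rpow_sq, ← mul_assoc,
      ofReal_sobWeight_rpow_mul]
    ring_nf
  calc (∑' n, weightedENorm t d n) ^ 2
      = (∑' n, ENNReal.ofReal (sobWeight n ^ (-1 : ℝ)) * weightedENorm (t + 1) d n) ^ 2 := by
        simp only [← split]
    _ ≤ (∑' n, ENNReal.ofReal (sobWeight n ^ (-1 : ℝ))) *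
          ∑' n, ENNReal.ofReal (sobWeight n ^ (-1 : ℝ)) * weightedENorm (t + 1) d n ^ 2 :=
        ENNReal.tsum_mul_sq_le _ _
    _ = ENNReal.ofReal (∑' n, (sobWeight n)⁻¹) * sobEnergy (2 * t + 1) d := by
        simp only [weighted_sq]
        simp only [sobEnergy, Real.rpow_neg_one]
        rw [ENNReal.ofReal_tsum_of_nonneg (fun n => inv_nonneg.mpr (sobWeight_pos n).le)
          summable_sobWeight_inv]

theorem sobEnergy_fconv_le (s : ℝ) (c d : ℤ → ℂ) :
    sobEnergy s (fconv c d) ≤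
      ENNReal.ofReal (2 ^ |s| * ∑' n, (sobWeight n)⁻¹) * sobEnergy s c *
        sobEnergy (|s| + 1) d := by
  set u := s / 2
  have h2u : 2 * |u| = |s| := by rw [abs_div, abs_two]; ring
  have h2u' : |u| * (2 : ℕ) = |s| := by rw [← h2u]; push_cast; ring
  calc sobEnergy s (fconv c d) = ∑' n, weightedENorm u (fconv c d) n ^ 2 := rfl
    _ ≤ ∑' n, (ENNReal.ofReal (2 ^ |u|) *
          ∑' k, weightedENorm u c k * weightedENorm |u| d (n - k)) ^ 2 := by
        gcongr with n; exact weightedENorm_fconv_le u c d n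
    _ = ENNReal.ofReal (2 ^ |u|) ^ 2 *
          ∑' n, (∑' k, weightedENorm u c k * weightedENorm |u| d (n - k)) ^ 2 := by
        simp only [mul_pow, ENNReal.tsum_mul_left]
    _ ≤ ENNReal.ofReal (2 ^ |u|) ^ 2 *
          (sobEnergy s c * (∑' k, weightedENorm |u| d k) ^ 2) := by
        gcongr; exact ENNReal.tsum_conv_sq_le _ _
    _ ≤ ENNReal.ofReal (2 ^ |u|) ^ 2 *
          (sobEnergy s c *
            (ENNReal.ofReal (∑' n, (sobWeight n)⁻¹) * sobEnergy (2 * |u| + 1) d)) := by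
        gcongr; exact tsum_weightedENorm_sq_le |u| d
    _ = ENNReal.ofReal (2 ^ |s| * ∑' n, (sobWeight n)⁻¹) * sobEnergy s c *
          sobEnergy (|s| + 1) d := by
        rw [← ENNReal.ofReal_pow (by positivity), ← Real.rpow_mul_natCast zero_le_two,
          ENNReal.ofReal_mul (by positivity), h2u, h2u']
        ring_nf

lemma memSob_and_sobNorm_le_of_sobEnergy_le {s t t' K : ℝ} {e c d : ℤ → ℂ} (hK : 0 ≤ K)
    (h : sobEnergy s e ≤ ENNReal.ofReal K * sobEnergy t c * sobEnergy t' d)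
    (hc : memSob t c) (hd : memSob t' d) :
    memSob s e ∧ sobNorm s e ≤ √K * sobNorm t c * sobNorm t' d := by
  rw [memSob_iff_sobEnergy_ne_top] at hc hd ⊢
  have hprod : ENNReal.ofReal K * sobEnergy t c * sobEnergy t' d ≠ ⊤ :=
    ENNReal.mul_ne_top (ENNReal.mul_ne_top ENNReal.ofReal_ne_top hc) hd
  refine ⟨ne_top_of_le_ne_top hprod h, ?_⟩
  simp only [sobNorm_eq_sqrt_sobEnergy, ← Real.sqrt_mul hK,
    ← Real.sqrt_mul (mul_nonneg hK ENNReal.toReal_nonneg)]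
  refine Real.sqrt_le_sqrt ((ENNReal.toReal_mono hprod h).trans_eq ?_)
  rw [ENNReal.toReal_mul, ENNReal.toReal_mul, ENNReal.toReal_ofReal hK]

/-- Leibniz rule: for r ≥ 1/2, ‖fg‖_{H^{r-1}} ≤ C ‖f‖_{H^{r-1}} ‖g‖_{H^{r+1}}. -/
theorem stmt9 : ∀ r : ℝ, 1 / 2 ≤ r → ∃ C : ℝ, 0 < C ∧ ∀ c d : ℤ → ℂ,
    memSob (r - 1) c → memSob (r + 1) d →
    memSob (r - 1) (fconv c d) ∧
      sobNorm (r - 1) (fconv c d) ≤ C * sobNorm (r - 1) c * sobNorm (r + 1) d := by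
  intro r hr
  set K := 2 ^ |r - 1| * ∑' n, (sobWeight n)⁻¹
  have hK : 0 < K := mul_pos (by positivity) tsum_sobWeight_inv_pos
  refine ⟨√K, Real.sqrt_pos.mpr hK,
    fun c d hc hd => memSob_and_sobNorm_le_of_sobEnergy_le hK.le ?_ hc hd⟩
  have hexp : |r - 1| + 1 ≤ r + 1 := by cases abs_cases (r - 1) <;> linarith
  calc sobEnergy (r - 1) (fconv c d)
      ≤ ENNReal.ofReal K * sobEnergy (r - 1) c * sobEnergy (|r - 1| + 1) d :=
        sobEnergy_fconv_le (r - 1) c d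
    _ ≤ ENNReal.ofReal K * sobEnergy (r - 1) c * sobEnergy (r + 1) d := by
        gcongr; exact sobEnergy_mono hexp d
end

section
/- Fix an integer n with |n| ≥ 2(1+ηT) and let β : [0,T] → ℝ be Lipschitz with constant η and |β(0)| ≤ 1. Consider the ODE system d/dt (a, b) = (i(n+β(t))³ b, i(n+β(t)) a) on ℂ². Then any solution satisfies, for the norm |(a,b)|ₙ² = |a|² + (1+n²)|b|², the bound |(a(t), b(t))|ₙ ≤ 6 e^{2ηT/|n|} |(a(0), b(0))|ₙ for 0 ≤ t ≤ T. -/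
open NNReal Set Filter Topology

/-! With the frequency frozen at a real value `m`, the system `a' = i m³ b`, `b' = i m a` rotates
`(a, m b)` and so conserves `modeEnergy m a b = |a|² + m²|b|²`. For the moving frequency
`m = n + β(t)`, the energy at time `z > x` exceeds the frozen energy of time `x` by at most
`η (z - x) (|m z| + |m x|) |b z|²`, so its right Dini derivative at `x` is at most
`2η |m| |b|² ≤ (2η/μ) m² |b|²` while `|m| ≥ μ`, and Gronwall's inequality gives growth at most
`e^{2ηt/μ}`. Since `|β| ≤ 1 + ηT ≤ |n|/2`, we have `|n|/2 ≤ |m| ≤ 3|n|/2`, so the energy is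
comparable to `|a|² + (1 + n²)|b|²` with constants `8` and `9/4`, and `8 · 9/4 ≤ 6²`. -/

theorem LipschitzOnWith.const_add {α E : Type*} [PseudoEMetricSpace α] [SeminormedAddCommGroup E]
    {K : ℝ≥0} {f : α → E} {s : Set α} (hf : LipschitzOnWith K f s) (c : E) :
    LipschitzOnWith K (fun x => c + f x) s := fun x hx y hy => by
  simpa only [edist_add_left] using hf hx hy


theorem abs_le_add_mul_of_lipschitzOnWith {f : ℝ → ℝ} {η : ℝ≥0} {T c : ℝ}
    (hf : LipschitzOnWith η f (Icc 0 T)) (h0 : |f 0| ≤ c) : ∀ s ∈ Icc 0 T, |f s| ≤ c + η * T := by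
  intro s hs
  have hlip := hf.dist_le_mul s hs 0 ⟨le_rfl, hs.1.trans hs.2⟩
  rw [Real.dist_eq, Real.dist_eq, sub_zero, abs_of_nonneg hs.1] at hlip
  linarith [abs_sub_abs_le_abs_sub (f s) (f 0), mul_le_mul_of_nonneg_left hs.2 η.coe_nonneg]


theorem eventually_slope_lt_of_sub_le {H P g : ℝ → ℝ} {x p r : ℝ}
    (hP : HasDerivAt P p x) (hg : ContinuousWithinAt g (Ioi x) x)
    (hHP : ∀ᶠ z in 𝓝[>] x, H z - H x ≤ P z - P x + (z - x) * g z) (hr : p + g x < r) :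
    ∀ᶠ z in 𝓝[>] x, (z - x)⁻¹ * (H z - H x) < r := by
  have hlim : Tendsto (fun z => slope P x z + g z) (𝓝[>] x) (𝓝 (p + g x)) :=
    (hP.tendsto_slope.mono_left (nhdsGT_le_nhdsNE x)).add hg
  filter_upwards [hlim.eventually_lt_const hr, hHP, self_mem_nhdsWithin] with z hlt hle hz
  have hzx : 0 < z - x := sub_pos.2 hz
  calc (z - x)⁻¹ * (H z - H x) ≤ (z - x)⁻¹ * (P z - P x + (z - x) * g z) := by gcongr
    _ = slope P x z + g z := by rw [slope_def_field]; field_simp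
    _ < r := hlt


noncomputable def modeEnergy (m : ℝ) (u v : ℂ) : ℝ := ‖u‖ ^ 2 + m ^ 2 * ‖v‖ ^ 2

theorem hasDerivAt_modeEnergy {a b : ℝ → ℂ} {m x : ℝ}
    (ha : HasDerivAt a (Complex.I * (m : ℂ) ^ 3 * b x) x)
    (hb : HasDerivAt b (Complex.I * m * a x) x) :
    HasDerivAt (fun t => modeEnergy m (a t) (b t)) 0 x := by
  refine (ha.norm_sq.add (hb.norm_sq.const_mul (m ^ 2))).congr_deriv ?_
  simp only [← Complex.ofReal_pow, Complex.inner, Complex.mul_re, Complex.I_re, Complex.ofReal_re,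
    zero_mul, Complex.I_im, Complex.ofReal_im, mul_zero, sub_self, Complex.mul_im, one_mul, zero_add,
    zero_sub, Complex.conj_re, neg_mul, Complex.conj_im, mul_neg, sub_neg_eq_add]
  ring

theorem modeEnergy_nonneg (m : ℝ) (u v : ℂ) : 0 ≤ modeEnergy m u v := by
  unfold modeEnergy; positivity

theorem modeEnergy_sub_modeEnergy_le (m m' : ℝ) (u v : ℂ) :
    modeEnergy m' u v - modeEnergy m u v ≤ |m' - m| * (|m'| + |m|) * ‖v‖ ^ 2 := by
  have hfactor : m' ^ 2 - m ^ 2 ≤ |m' - m| * (|m'| + |m|) :=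
    calc m' ^ 2 - m ^ 2 = (m' - m) * (m' + m) := by ring
      _ ≤ |(m' - m) * (m' + m)| := le_abs_self _
      _ ≤ |m' - m| * (|m'| + |m|) := by rw [abs_mul]; gcongr; exact abs_add_le _ _
  calc modeEnergy m' u v - modeEnergy m u v = (m' ^ 2 - m ^ 2) * ‖v‖ ^ 2 := by
        unfold modeEnergy; ring
    _ ≤ _ := by gcongr

theorem modeEnergy_le_mul_exp {t₀ T μ : ℝ} {η : ℝ≥0} {m : ℝ → ℝ} {a b : ℝ → ℂ}
    (hm : LipschitzOnWith η m (Icc t₀ T)) (hμ : 0 < μ) (hmμ : ∀ t ∈ Icc t₀ T, μ ≤ |m t|)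
    (ha : ∀ t ∈ Icc t₀ T, HasDerivAt a (Complex.I * (m t : ℂ) ^ 3 * b t) t)
    (hb : ∀ t ∈ Icc t₀ T, HasDerivAt b (Complex.I * (m t : ℂ) * a t) t) :
    ∀ t ∈ Icc t₀ T, modeEnergy (m t) (a t) (b t) ≤
      modeEnergy (m t₀) (a t₀) (b t₀) * Real.exp (2 * η / μ * (t - t₀)) := by
  set H := fun t => modeEnergy (m t) (a t) (b t)
  have hH : ContinuousOn H (Icc t₀ T) := by
    have ha' : ContinuousOn a (Icc t₀ T) := fun t ht => (ha t ht).continuousAt.continuousWithinAt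
    have hb' : ContinuousOn b (Icc t₀ T) := fun t ht => (hb t ht).continuousAt.continuousWithinAt
    have hm' := hm.continuousOn
    unfold H modeEnergy
    fun_prop
  have hslope : ∀ x ∈ Ico t₀ T, ∀ r, 2 * η / μ * H x < r →
      ∃ᶠ z in 𝓝[>] x, (z - x)⁻¹ * (H z - H x) < r := by
    intro x hx r hr
    have hxI := Ico_subset_Icc_self hx
    have hI : Icc t₀ T ∈ 𝓝[>] x := Icc_mem_nhdsGT_of_mem hx
    refine (eventually_slope_lt_of_sub_le (g := fun z => η * ((|m z| + |m x|) * ‖b z‖ ^ 2))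
      (hasDerivAt_modeEnergy (ha x hxI) (hb x hxI)) ?_ ?_ ?_).frequently
    · have hmx := (hm.continuousOn x hxI).mono_of_mem_nhdsWithin hI
      have hbx := (hb x hxI).continuousAt.continuousWithinAt (s := Ioi x)
      fun_prop
    · filter_upwards [hI, self_mem_nhdsWithin] with z hz (hxz : x < z)
      have hlip : |m z - m x| ≤ η * (z - x) := by
        simpa [Real.dist_eq, abs_of_pos (sub_pos.2 hxz)] using hm.dist_le_mul z hz x hxI
      calc H z - H x = modeEnergy (m x) (a z) (b z) - modeEnergy (m x) (a x) (b x)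
            + (modeEnergy (m z) (a z) (b z) - modeEnergy (m x) (a z) (b z)) := by ring
        _ ≤ _ := by
          grw [modeEnergy_sub_modeEnergy_le, hlip]
          exact le_of_eq (by ring)
    · have hmx : |m x| ≤ m x ^ 2 / μ := by
        rw [le_div_iff₀ hμ, ← sq_abs]; nlinarith [hmμ x hxI, abs_nonneg (m x)]
      have hE : m x ^ 2 * ‖b x‖ ^ 2 ≤ H x := le_add_of_nonneg_left (sq_nonneg _)
      calc 0 + η * ((|m x| + |m x|) * ‖b x‖ ^ 2) = 2 * η * (|m x| * ‖b x‖ ^ 2) := by ring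
        _ ≤ 2 * η * (m x ^ 2 / μ * ‖b x‖ ^ 2) := by gcongr
        _ = 2 * η / μ * (m x ^ 2 * ‖b x‖ ^ 2) := by ring
        _ ≤ 2 * η / μ * H x := by gcongr
        _ < r := hr
  intro t ht
  simpa [gronwallBound_ε0] using
    le_gronwallBound_of_liminf_deriv_right_le hH hslope le_rfl (fun x _ => (add_zero _).ge) t ht

theorem abs_div_two_le_abs_add {n x : ℝ} (hx : |x| ≤ |n| / 2) : |n| / 2 ≤ |n + x| := by
  have h := abs_sub_abs_le_abs_sub n (-x)
  rw [abs_neg, sub_neg_eq_add] at h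
  linarith

theorem two_mul_abs_add_le {n x : ℝ} (hx : |x| ≤ |n| / 2) : 2 * |n + x| ≤ 3 * |n| := by
  linarith [abs_add_le n x]

theorem exp_div_half_mul_le_exp_sq {η N t T : ℝ} (hη : 0 ≤ η) (hN : 0 < N) (ht : t ≤ T) :
    Real.exp (2 * η / (N / 2) * t) ≤ Real.exp (2 * η * T / N) ^ 2 := by
  rw [sq, ← Real.exp_add, Real.exp_le_exp]
  calc 2 * η / (N / 2) * t = 4 * η * t / N := by field_simp; ring
    _ ≤ 4 * η * T / N := by gcongr
    _ = _ := by ring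

theorem weightedNormSq_le_modeEnergy {n m : ℝ} (u v : ℂ) (hn : 1 ≤ |n|) (hnm : |n| ≤ 2 * |m|) :
    ‖u‖ ^ 2 + (1 + n ^ 2) * ‖v‖ ^ 2 ≤ 8 * modeEnergy m u v := by
  have h : 1 + n ^ 2 ≤ 8 * m ^ 2 := by
    nlinarith [sq_abs n, sq_abs m, abs_nonneg n]
  unfold modeEnergy
  nlinarith [mul_le_mul_of_nonneg_right h (sq_nonneg ‖v‖), sq_nonneg ‖u‖]

theorem modeEnergy_le_weightedNormSq {n m : ℝ} (u v : ℂ) (hmn : 2 * |m| ≤ 3 * |n|) :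
    modeEnergy m u v ≤ 9 / 4 * (‖u‖ ^ 2 + (1 + n ^ 2) * ‖v‖ ^ 2) := by
  have h : m ^ 2 ≤ 9 / 4 * (1 + n ^ 2) := by
    nlinarith [sq_abs n, sq_abs m, abs_nonneg m]
  unfold modeEnergy
  nlinarith [mul_le_mul_of_nonneg_right h (sq_nonneg ‖v‖), sq_nonneg ‖u‖]

theorem stmt14_general (T : ℝ) (η : ℝ≥0) (β : ℝ → ℝ)
    (hβ : LipschitzOnWith η β (Set.Icc 0 T)) (hβ0 : |β 0| ≤ 1)
    (n : ℤ) (hn : 2 * (1 + (η : ℝ) * T) ≤ |(n : ℝ)|)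
    (a b : ℝ → ℂ)
    (ha : ∀ t ∈ Set.Icc (0:ℝ) T,
      HasDerivAt a (Complex.I * ((n : ℂ) + (β t : ℂ)) ^ 3 * b t) t)
    (hb : ∀ t ∈ Set.Icc (0:ℝ) T,
      HasDerivAt b (Complex.I * ((n : ℂ) + (β t : ℂ)) * a t) t) :
    ∀ t ∈ Set.Icc (0:ℝ) T,
      Real.sqrt (‖a t‖ ^ 2 + (1 + (n : ℝ) ^ 2) * ‖b t‖ ^ 2) ≤
        6 * Real.exp (2 * (η : ℝ) * T / |(n : ℝ)|) *
          Real.sqrt (‖a 0‖ ^ 2 + (1 + (n : ℝ) ^ 2) * ‖b 0‖ ^ 2) := by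
  intro t ht
  have hT : 0 ≤ T := ht.1.trans ht.2
  have hn2 : 2 ≤ |(n : ℝ)| := by linarith [mul_nonneg η.coe_nonneg hT]
  have hβ_le : ∀ s ∈ Icc 0 T, |β s| ≤ |(n : ℝ)| / 2 := fun s hs =>
    (abs_le_add_mul_of_lipschitzOnWith hβ hβ0 s hs).trans (by linarith)
  have henergy := modeEnergy_le_mul_exp (hβ.const_add (n : ℝ)) (by linarith)
    (fun s hs => abs_div_two_le_abs_add (hβ_le s hs))
    (fun s hs => by simpa using ha s hs) (fun s hs => by simpa using hb s hs) t ht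
  set E := Real.exp (2 * (η : ℝ) * T / |(n : ℝ)|)
  have hexp : Real.exp (2 * η / (|(n : ℝ)| / 2) * (t - 0)) ≤ E ^ 2 :=
    exp_div_half_mul_le_exp_sq η.coe_nonneg (by linarith) (by linarith [ht.2])
  have hsq : ‖a t‖ ^ 2 + (1 + (n : ℝ) ^ 2) * ‖b t‖ ^ 2 ≤
      (6 * E) ^ 2 * (‖a 0‖ ^ 2 + (1 + (n : ℝ) ^ 2) * ‖b 0‖ ^ 2) :=
    calc _ ≤ 8 * modeEnergy (n + β t) (a t) (b t) :=
          weightedNormSq_le_modeEnergy _ _ (by linarith)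
            (by linarith [abs_div_two_le_abs_add (hβ_le t ht)])
      _ ≤ 8 * (modeEnergy (n + β 0) (a 0) (b 0) * E ^ 2) := by
          grw [henergy, hexp]
          exact modeEnergy_nonneg _ _ _
      _ ≤ 8 * (9 / 4 * (‖a 0‖ ^ 2 + (1 + (n : ℝ) ^ 2) * ‖b 0‖ ^ 2) * E ^ 2) := by
          grw [modeEnergy_le_weightedNormSq _ _ (two_mul_abs_add_le (hβ_le 0 ⟨le_rfl, hT⟩))]
      _ ≤ _ := by
          have : 0 ≤ (‖a 0‖ ^ 2 + (1 + (n : ℝ) ^ 2) * ‖b 0‖ ^ 2) * E ^ 2 := by positivity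
          linarith
  rw [← Real.sqrt_sq (by positivity : 0 ≤ 6 * E), ← Real.sqrt_mul (sq_nonneg _)]
  exact Real.sqrt_le_sqrt hsq

/-- Gronwall-type Fourier-mode estimate for the linearized elastica evolution:
    for |n| ≥ 2(1+ηT), solutions of a' = i(n+β)³ b, b' = i(n+β) a satisfy
    |(a(t),b(t))|ₙ ≤ 6 e^{2ηT/|n|} |(a(0),b(0))|ₙ. -/
theorem stmt14 (T : ℝ) (hT : 0 < T) (η : ℝ≥0) (β : ℝ → ℝ)
    (hβ : LipschitzOnWith η β (Set.Icc 0 T)) (hβ0 : |β 0| ≤ 1)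
    (n : ℤ) (hn : 2 * (1 + (η : ℝ) * T) ≤ |(n : ℝ)|)
    (a b : ℝ → ℂ)
    (ha : ∀ t ∈ Set.Icc (0:ℝ) T,
      HasDerivAt a (Complex.I * ((n : ℂ) + (β t : ℂ)) ^ 3 * b t) t)
    (hb : ∀ t ∈ Set.Icc (0:ℝ) T,
      HasDerivAt b (Complex.I * ((n : ℂ) + (β t : ℂ)) * a t) t) :
    ∀ t ∈ Set.Icc (0:ℝ) T,
      Real.sqrt (‖a t‖ ^ 2 + (1 + (n : ℝ) ^ 2) * ‖b t‖ ^ 2) ≤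
        6 * Real.exp (2 * (η : ℝ) * T / |(n : ℝ)|) *
          Real.sqrt (‖a 0‖ ^ 2 + (1 + (n : ℝ) ^ 2) * ‖b 0‖ ^ 2) :=
  stmt14_general T η β hβ hβ0 n hn a b ha hb
end

section
/- Let u : [0,2π]×[0,T] → ℝ³ be a C⁴ (in s), C² (in t) solution of ∂_t² u = ∂_s²(-∂_s² + λ)u with |u(s,t)| = 1 for all s,t, and set κ² = |∂_s u|². Then the Lagrange multiplier λ satisfies the elliptic identity (-∂_s² + κ²)(λ + 2κ²) = |∂_t u|² + 2κ⁴ - |∂_s² u|² pointwise. -/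
/-!
Pair the wave equation with `u`. On the left, differentiating `‖u‖² = 1` twice in `t` gives
`⟪u, ∂ₜ²u⟫ = -‖∂ₜu‖²`. On the right, `∂ₛ²(-∂ₛ²u + λu)` is expanded by Leibniz, and the pairings
`⟪u, ∂ₛu⟫ = 0`, `⟪u, ∂ₛ²u⟫ = -κ²` and `⟪u, ∂ₛ⁴u⟫ = -4⟪∂ₛu, ∂ₛ³u⟫ - 3‖∂ₛ²u‖²` come from
differentiating `‖u‖² = 1` up to four times in `s`. The `⟪∂ₛu, ∂ₛ³u⟫` term is exactly what
appears in `∂ₛ²κ²`, so it cancels in `-∂ₛ²(λ + 2κ²)`.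
-/

open scoped RealInnerProductSpace

section IterateDeriv

variable {𝕜 : Type*} [NontriviallyNormedField 𝕜] {F : Type*} [NormedAddCommGroup F]
  [NormedSpace 𝕜 F] {f : 𝕜 → F} {n : WithTop ℕ∞}

theorem ContDiff.hasDerivAt_iterate_deriv (h : ContDiff 𝕜 n f) (k : ℕ)
    (hk : (k : WithTop ℕ∞) < n) (x : 𝕜) : HasDerivAt (deriv^[k] f) (deriv^[k + 1] f x) x := by
  rw [Function.iterate_succ_apply', ← iteratedDeriv_eq_iterate]
  exact (h.differentiable_iteratedDeriv k hk x).hasDerivAt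

theorem deriv_deriv_eq_of_hasDerivAt {f' : 𝕜 → F} {f'' : F} {x : 𝕜}
    (h₁ : ∀ y, HasDerivAt f (f' y) y) (h₂ : HasDerivAt f' f'' x) : deriv^[2] f x = f'' := by
  rw [Function.iterate_succ_apply', Function.iterate_one, funext fun y => (h₁ y).deriv]
  exact h₂.deriv

end IterateDeriv

section ConstantNorm

variable {E : Type*} [NormedAddCommGroup E] [InnerProductSpace ℝ E] {γ : ℝ → E} {r : ℝ}

theorem inner_deriv_eq_zero_of_norm_eq (hγ : Differentiable ℝ γ) (hr : ∀ x, ‖γ x‖ = r)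
    (x : ℝ) : ⟪γ x, deriv γ x⟫ = 0 := by
  have h : HasDerivAt (‖γ ·‖ ^ 2) 0 x := by simpa only [hr] using hasDerivAt_const x (r ^ 2)
  have := (hγ x).hasDerivAt.norm_sq.unique h
  linarith

theorem inner_iterate_deriv_two_of_norm_eq (hγ : ContDiff ℝ 2 γ) (hr : ∀ x, ‖γ x‖ = r)
    (x : ℝ) : ⟪γ x, deriv^[2] γ x⟫ = -‖deriv γ x‖ ^ 2 := by
  have h₀ : HasDerivAt γ (deriv γ x) x := hγ.hasDerivAt_iterate_deriv 0 (by norm_num) x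
  have h₁ : HasDerivAt (deriv γ) (deriv^[2] γ x) x :=
    hγ.hasDerivAt_iterate_deriv 1 (by norm_num) x
  have h := (h₀.inner ℝ h₁).unique ((hasDerivAt_const x 0).congr_of_eventuallyEq
    (.of_forall (inner_deriv_eq_zero_of_norm_eq (hγ.differentiable (by norm_num)) hr)))
  rw [← real_inner_self_eq_norm_sq]
  linarith

theorem inner_iterate_deriv_three_of_norm_eq (hγ : ContDiff ℝ 3 γ) (hr : ∀ x, ‖γ x‖ = r)
    (x : ℝ) : ⟪γ x, deriv^[3] γ x⟫ = -3 * ⟪deriv γ x, deriv^[2] γ x⟫ := by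
  have h₀ : HasDerivAt γ (deriv γ x) x := hγ.hasDerivAt_iterate_deriv 0 (by norm_num) x
  have h₁ : HasDerivAt (deriv γ) (deriv^[2] γ x) x :=
    hγ.hasDerivAt_iterate_deriv 1 (by norm_num) x
  have h₂ : HasDerivAt (deriv^[2] γ) (deriv^[3] γ x) x :=
    hγ.hasDerivAt_iterate_deriv 2 (by norm_num) x
  have h := (h₀.inner ℝ h₂).unique (h₁.norm_sq.neg.congr_of_eventuallyEq
    (.of_forall (inner_iterate_deriv_two_of_norm_eq (hγ.of_le (by norm_num)) hr)))
  linarith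

theorem inner_iterate_deriv_four_of_norm_eq (hγ : ContDiff ℝ 4 γ) (hr : ∀ x, ‖γ x‖ = r)
    (x : ℝ) : ⟪γ x, deriv^[4] γ x⟫ =
      -4 * ⟪deriv γ x, deriv^[3] γ x⟫ - 3 * ‖deriv^[2] γ x‖ ^ 2 := by
  have h₀ : HasDerivAt γ (deriv γ x) x := hγ.hasDerivAt_iterate_deriv 0 (by norm_num) x
  have h₁ : HasDerivAt (deriv γ) (deriv^[2] γ x) x :=
    hγ.hasDerivAt_iterate_deriv 1 (by norm_num) x
  have h₂ : HasDerivAt (deriv^[2] γ) (deriv^[3] γ x) x :=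
    hγ.hasDerivAt_iterate_deriv 2 (by norm_num) x
  have h₃ : HasDerivAt (deriv^[3] γ) (deriv^[4] γ x) x :=
    hγ.hasDerivAt_iterate_deriv 3 (by norm_num) x
  have h := (h₀.inner ℝ h₃).unique (((h₁.inner ℝ h₂).const_mul (-3)).congr_of_eventuallyEq
    (.of_forall (inner_iterate_deriv_three_of_norm_eq (hγ.of_le (by norm_num)) hr)))
  rw [← real_inner_self_eq_norm_sq]
  linarith

end ConstantNorm

section WaveEquation

variable {E : Type*} [NormedAddCommGroup E] [InnerProductSpace ℝ E] {v : ℝ → E} {L : ℝ → ℝ}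

theorem iterate_deriv_two_neg_add_smul (hv : ContDiff ℝ 4 v) (hL : ContDiff ℝ 2 L) (x : ℝ) :
    deriv^[2] (fun y => -deriv^[2] v y + L y • v y) x =
      -deriv^[4] v x + (L x • deriv^[2] v x + (2 * deriv L x) • deriv v x +
        deriv^[2] L x • v x) := by
  have hv₀ : ∀ y, HasDerivAt v (deriv v y) y := hv.hasDerivAt_iterate_deriv 0 (by norm_num)
  have hv₁ : ∀ y, HasDerivAt (deriv v) (deriv^[2] v y) y :=
    hv.hasDerivAt_iterate_deriv 1 (by norm_num)
  have hv₂ : ∀ y, HasDerivAt (deriv^[2] v) (deriv^[3] v y) y :=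
    hv.hasDerivAt_iterate_deriv 2 (by norm_num)
  have hv₃ : ∀ y, HasDerivAt (deriv^[3] v) (deriv^[4] v y) y :=
    hv.hasDerivAt_iterate_deriv 3 (by norm_num)
  have hL₀ : ∀ y, HasDerivAt L (deriv L y) y := hL.hasDerivAt_iterate_deriv 0 (by norm_num)
  have hL₁ : ∀ y, HasDerivAt (deriv L) (deriv^[2] L y) y :=
    hL.hasDerivAt_iterate_deriv 1 (by norm_num)
  refine (deriv_deriv_eq_of_hasDerivAt (fun y => (hv₂ y).neg.add ((hL₀ y).smul (hv₀ y)))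
    ((hv₃ x).neg.add (((hL₀ x).smul (hv₁ x)).add ((hL₁ x).smul (hv₀ x))))).trans ?_
  module

theorem iterate_deriv_two_add_two_mul_norm_sq (hL : ContDiff ℝ 2 L) (hv : ContDiff ℝ 2 v)
    (x : ℝ) : deriv^[2] (fun y => L y + 2 * ‖v y‖ ^ 2) x =
      deriv^[2] L x + 4 * (⟪v x, deriv^[2] v x⟫ + ‖deriv v x‖ ^ 2) := by
  have hv₀ : ∀ y, HasDerivAt v (deriv v y) y := hv.hasDerivAt_iterate_deriv 0 (by norm_num)
  have hv₁ : ∀ y, HasDerivAt (deriv v) (deriv^[2] v y) y :=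
    hv.hasDerivAt_iterate_deriv 1 (by norm_num)
  have hL₀ : ∀ y, HasDerivAt L (deriv L y) y := hL.hasDerivAt_iterate_deriv 0 (by norm_num)
  have hL₁ : ∀ y, HasDerivAt (deriv L) (deriv^[2] L y) y :=
    hL.hasDerivAt_iterate_deriv 1 (by norm_num)
  refine (deriv_deriv_eq_of_hasDerivAt (fun y => (hL₀ y).add ((hv₀ y).norm_sq.const_mul 2))
    ((hL₁ x).add (((hv₀ x).inner ℝ (hv₁ x)).const_mul 2 |>.const_mul 2))).trans ?_
  rw [← real_inner_self_eq_norm_sq]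
  ring

end WaveEquation

/-- The tension identity: for a sphere-valued solution of ∂_t²u = ∂_s²((-∂_s²+λ)u),
    with κ² = |∂_s u|², one has (-∂_s² + κ²)(λ + 2κ²) = |∂_t u|² + 2κ⁴ - |∂_s²u|². -/
theorem stmt19
    (u : ℝ → ℝ → EuclideanSpace ℝ (Fin 3)) (lam : ℝ → ℝ → ℝ)
    (hu : ContDiff ℝ 4 (Function.uncurry u))
    (hlam : ContDiff ℝ 2 (Function.uncurry lam))
    (hconstraint : ∀ s t, ‖u s t‖ = 1)
    (heq : ∀ s t, deriv (deriv (u s)) t =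
      deriv (fun σ => deriv (fun σ' =>
        -(deriv (fun a => deriv (fun a' => u a' t) a) σ') + lam σ' t • u σ' t) σ) s) :
    ∀ s t,
      -(deriv (fun a => deriv (fun a' =>
            lam a' t + 2 * ‖deriv (fun b => u b t) a'‖ ^ 2) a) s) +
        ‖deriv (fun b => u b t) s‖ ^ 2 * (lam s t + 2 * ‖deriv (fun b => u b t) s‖ ^ 2) =
      ‖deriv (u s) t‖ ^ 2 + 2 * ‖deriv (fun b => u b t) s‖ ^ 4 -
        ‖deriv (fun a => deriv (fun b => u b t) a) s‖ ^ 2 := by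
  intro s t
  have hv : ContDiff ℝ 4 (u · t) := hu.comp (contDiff_id.prodMk contDiff_const)
  have hL : ContDiff ℝ 2 (lam · t) := hlam.comp (contDiff_id.prodMk contDiff_const)
  have hw : ContDiff ℝ 2 (u s) :=
    (hu.comp (contDiff_const.prodMk contDiff_id)).of_le (by norm_num)
  have hunit : ‖u s t‖ ^ 2 = 1 := by rw [hconstraint, one_pow]
  have htime : ⟪u s t, deriv (deriv (u s)) t⟫ = -‖deriv (u s) t‖ ^ 2 :=
    inner_iterate_deriv_two_of_norm_eq hw (hconstraint s) t
  rw [(heq s t).trans (iterate_deriv_two_neg_add_smul hv hL s)] at htime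
  simp only [inner_add_right, inner_neg_right, real_inner_smul_right,
    real_inner_self_eq_norm_sq] at htime
  have h₁ := inner_deriv_eq_zero_of_norm_eq (hv.differentiable (by norm_num)) (hconstraint · t) s
  have h₂ := inner_iterate_deriv_two_of_norm_eq (hv.of_le (by norm_num)) (hconstraint · t) s
  have h₄ := inner_iterate_deriv_four_of_norm_eq hv (hconstraint · t) s
  have htension :=
    iterate_deriv_two_add_two_mul_norm_sq hL ((hv.of_le (by norm_num)).iterate_deriv' 2 1) s
  simp only [Function.iterate_succ_apply', Function.iterate_zero_apply] at htime h₂ h₄ htension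
  rw [htension]
  linear_combination -htime - h₄ + deriv (deriv (lam · t)) s * hunit +
    2 * deriv (lam · t) s * h₁ + lam s t * h₂
end
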